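/- arXiv:2102.03386 — 4 statements merged into one kernel-verified Lean document; each statement's English description precedes it below -/
import Mathlib

section
/- Let F be an infinite field and f(x) ∈ F[x] a nonzero polynomial. Then the two-variable identity f([x,y]) = 0 (where [x,y] = xy − yx) is a nonmatrix identity: it fails in M₂(F). Specifically, for a = λe₁₂ and b = e₂₁ in M₂(F), the (1,1) entry of f([a,b]) equals f(λ), so choosing λ with f(λ) ≠ 0 gives f([a,b]) ≠ 0. -/
lemma comm_eq_diag {F : Type} [Field F] (lam : F) :
    ((lam • Matrix.single (0 : Fin 2) (1 : Fin 2) (1 : F)) *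
        Matrix.single (1 : Fin 2) (0 : Fin 2) (1 : F) -
      Matrix.single (1 : Fin 2) (0 : Fin 2) (1 : F) *
        (lam • Matrix.single (0 : Fin 2) (1 : Fin 2) (1 : F))) =
    Matrix.diagonal ![lam, -lam] := by
  ext i j
  fin_cases i <;> fin_cases j <;>
    simp [Matrix.mul_apply, Matrix.single, Matrix.diagonal, Fin.sum_univ_succ]

lemma key {F : Type} [Field F] (f : Polynomial F) (lam : F) :
    (Polynomial.aeval
        ((lam • Matrix.single (0 : Fin 2) (1 : Fin 2) (1 : F)) *
            Matrix.single (1 : Fin 2) (0 : Fin 2) (1 : F) -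
          Matrix.single (1 : Fin 2) (0 : Fin 2) (1 : F) *
            (lam • Matrix.single (0 : Fin 2) (1 : Fin 2) (1 : F))) f) 0 0 =
      Polynomial.eval lam f := by
  rw [comm_eq_diag]
  have : Matrix.diagonal ![lam, -lam] = Matrix.diagonalAlgHom (n := Fin 2) F ![lam, -lam] := rfl
  rw [this, Polynomial.aeval_algHom_apply, Matrix.diagonalAlgHom_apply,
    Matrix.diagonal_apply_eq]
  have h2 : (Polynomial.aeval (![lam, -lam] : Fin 2 → F) f) 0 =
      Pi.evalAlgHom F (fun _ : Fin 2 => F) 0 (Polynomial.aeval ![lam, -lam] f) := rfl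
  rw [h2, ← Polynomial.aeval_algHom_apply]
  simp [Polynomial.aeval_def, Polynomial.eval₂_eq_eval_map]

/-- Over an infinite field `F`, for a nonzero `f ∈ F[x]` the identity `f([x,y]) = 0` fails
in `M₂(F)`: with `a = λ·e₁₂`, `b = e₂₁`, the `(1,1)` entry of `f([a,b])` is `f(λ)`. -/
theorem commutator_identity_is_nonmatrix {F : Type} [Field F] [Infinite F]
    (f : Polynomial F) (hf : f ≠ 0) :
    (∀ lam : F,
      (Polynomial.aeval
          ((lam • Matrix.single (0 : Fin 2) (1 : Fin 2) (1 : F)) *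
              Matrix.single (1 : Fin 2) (0 : Fin 2) (1 : F) -
            Matrix.single (1 : Fin 2) (0 : Fin 2) (1 : F) *
              (lam • Matrix.single (0 : Fin 2) (1 : Fin 2) (1 : F))) f) 0 0 =
        Polynomial.eval lam f) ∧
    ∃ a b : Matrix (Fin 2) (Fin 2) F, Polynomial.aeval (a * b - b * a) f ≠ 0 := by
  refine ⟨fun lam => key f lam, ?_⟩
  obtain ⟨lam, hlam⟩ := f.exists_eval_ne_zero_of_natDegree_lt_card hf
    ((Cardinal.nat_lt_aleph0 _).trans_le (Cardinal.aleph0_le_mk F))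
  refine ⟨lam • Matrix.single (0 : Fin 2) (1 : Fin 2) (1 : F),
    Matrix.single (1 : Fin 2) (0 : Fin 2) (1 : F), fun h => hlam ?_⟩
  rw [← key f lam, h]
  simp
end

section
/- Let A be a unital algebra over a commutative ring R whose group of units U(A) satisfies a Laurent polynomial identity P in two variables with nonzero constant term, such that every nonconstant word of P has nonzero total exponent sum (i.e., the sum over both variables of all exponents is nonzero). Then there exists a nonzero one-variable polynomial f₀ with coefficients in R and possibly negative integer exponents (a Laurent polynomial in one variable) such that f₀(u) = 0 for every unit u ∈ U(A); in particular, after clearing negative powers, there is a nonzero polynomial f ∈ R[x] vanishing on all of U(A). -/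
/-- Evaluation of a Laurent polynomial `P ∈ R[F₂]` at a pair of units of an `R`-algebra. -/
noncomputable def lpiEval (R A : Type) [CommRing R] [Ring A] [Algebra R A]
    (P : MonoidAlgebra R (FreeGroup (Fin 2))) (c : Fin 2 → Aˣ) : A :=
  MonoidAlgebra.lift R A (FreeGroup (Fin 2))
    ((Units.coeHom A).comp (FreeGroup.lift c)) P

/-- The total exponent sum of a word in the free group of rank 2. -/
def totalExpSum (w : FreeGroup (Fin 2)) : ℤ :=
  Multiplicative.toAdd (FreeGroup.lift (fun _ => Multiplicative.ofAdd (1 : ℤ)) w)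

/-- If `U(A)` satisfies a Laurent polynomial identity with nonzero constant term whose
nonconstant words all have nonzero total exponent sum, then some nonzero one-variable
polynomial over `R` vanishes on all units of `A`. -/
theorem exists_polynomial_vanishing_on_units {R A : Type} [CommRing R] [Ring A] [Algebra R A]
    (P : MonoidAlgebra R (FreeGroup (Fin 2)))
    (hconst : P.coeff 1 ≠ 0)
    (hexp : ∀ w ∈ P.coeff.support, w ≠ 1 → totalExpSum w ≠ 0)
    (hLPI : ∀ c : Fin 2 → Aˣ, lpiEval R A P c = 0) :
    ∃ f : Polynomial R, f ≠ 0 ∧ ∀ u : Aˣ, Polynomial.aeval (u : A) f = 0 := by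
  classical
  have key : ∀ (u : Aˣ) (w : FreeGroup (Fin 2)),
      FreeGroup.lift (fun _ : Fin 2 => u) w = u ^ totalExpSum w := by
    intro u w
    have h : FreeGroup.lift (fun _ : Fin 2 => u)
        = (zpowersHom Aˣ u).comp (FreeGroup.lift (fun _ => Multiplicative.ofAdd (1 : ℤ))) := by
      ext i
      simp [zpowersHom_apply]
    rw [h]
    simp [totalExpSum, zpowersHom_apply]
  have tes1 : totalExpSum 1 = 0 := by simp [totalExpSum]
  set N : ℕ := P.coeff.support.sup fun w => (-totalExpSum w).toNat with hNdef
  have hN : ∀ w ∈ P.coeff.support, 0 ≤ totalExpSum w + N := by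
    intro w hw
    have h1 : (-totalExpSum w).toNat ≤ N := Finset.le_sup (f := fun w => (-totalExpSum w).toNat) hw
    have h2 : ((-totalExpSum w).toNat : ℤ) ≤ N := by exact_mod_cast h1
    have h3 := Int.self_le_toNat (-totalExpSum w)
    omega
  refine ⟨∑ w ∈ P.coeff.support, Polynomial.monomial (totalExpSum w + N).toNat (P.coeff w), ?_, ?_⟩
  · intro hf
    have hc : (∑ w ∈ P.coeff.support, Polynomial.monomial (totalExpSum w + N).toNat (P.coeff w)).coeff N
        = P.coeff 1 := by
      rw [Polynomial.finset_sum_coeff]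
      have h1mem : (1 : FreeGroup (Fin 2)) ∈ P.coeff.support := Finsupp.mem_support_iff.2 hconst
      rw [Finset.sum_eq_single_of_mem 1 h1mem]
      · simp [Polynomial.coeff_monomial, tes1]
      · intro w hw hne
        rw [Polynomial.coeff_monomial, if_neg]
        intro hEq
        have : totalExpSum w + N = (N : ℤ) := by
          have := Int.toNat_of_nonneg (hN w hw)
          omega
        exact hexp w hw hne (by omega)
    rw [hf] at hc
    simp at hc
    exact hconst hc.symm
  · intro u
    have h := hLPI (fun _ => u)
    unfold lpiEval at h
    rw [MonoidAlgebra.lift_apply] at h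
    have h' : ∑ w ∈ P.coeff.support, algebraMap R A (P.coeff w) * ((u ^ totalExpSum w : Aˣ) : A) = 0 := by
      rw [← h, Finsupp.sum]
      refine Finset.sum_congr rfl fun w hw => ?_
      rw [Algebra.smul_def]
      simp [key u w]
    rw [map_sum]
    have : ∀ w ∈ P.coeff.support,
        (Polynomial.aeval (u : A)) (Polynomial.monomial (totalExpSum w + N).toNat (P.coeff w))
        = algebraMap R A (P.coeff w) * ((u ^ totalExpSum w : Aˣ) : A) * (u : A) ^ N := by
      intro w hw
      rw [Polynomial.aeval_monomial, mul_assoc]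
      congr 1
      have : ((u : A)) ^ (totalExpSum w + N).toNat = ((u ^ ((totalExpSum w + N).toNat : ℤ) : Aˣ) : A) := by
        rw [zpow_natCast]
        exact (Units.val_pow_eq_pow_val u _).symm
      rw [this, Int.toNat_of_nonneg (hN w hw), zpow_add, Units.val_mul, zpow_natCast,
        Units.val_pow_eq_pow_val]
    rw [Finset.sum_congr rfl this, ← Finset.sum_mul, h', zero_mul]
end

section
/- Let F be a field, G a group, and g ∈ G an element of finite order n with n invertible in F. Suppose every idempotent of the group algebra FG is central. Then the cyclic subgroup ⟨g⟩ is normal in G. -/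
open Finsupp

/-- If `g ∈ G` has finite order `n` with `n` invertible in `F`, and every idempotent of the
group algebra `FG` is central, then the cyclic subgroup `⟨g⟩` is normal in `G`. -/
theorem zpowers_normal_of_idempotents_central {F : Type} [Field F] {G : Type} [Group G]
    (g : G) (hfin : IsOfFinOrder g) (hinv : ((orderOf g : F)) ≠ 0)
    (hidem : ∀ e : MonoidAlgebra F G, e * e = e →
      ∀ x : MonoidAlgebra F G, x * e = e * x) :
    (Subgroup.zpowers g).Normal := by
  set H := Subgroup.zpowers g with hH
  haveI : Finite (H : Set G) := hfin.finite_zpowers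
  haveI : Fintype H := Fintype.ofFinite H
  set n := orderOf g with hn
  have hcard : (Fintype.card H : F) = (n : F) := by
    rw [← Nat.card_eq_fintype_card, Nat.card_zpowers]
  set e : MonoidAlgebra F G :=
    (n : F)⁻¹ • ∑ y : H, MonoidAlgebra.single (y : G) (1 : F) with he
  -- coefficient computation
  have heval : ∀ x : G, e.coeff x = if x ∈ H then (n : F)⁻¹ else 0 := by
    intro x
    classical
    rw [he, MonoidAlgebra.coeff_smul, Finsupp.smul_apply, MonoidAlgebra.coeff_sum, Finsupp.finset_sum_apply]
    simp only [MonoidAlgebra.single_apply, smul_eq_mul]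
    by_cases hx : x ∈ H
    · rw [Finset.sum_eq_single (⟨x, hx⟩ : H)]
      · simp [hx]
      · intro b _ hb
        simp only [ite_eq_right_iff]
        intro hbx
        exact absurd (Subtype.ext hbx) hb
      · simp
    · rw [Finset.sum_eq_zero, if_neg hx]
      · simp
      · intro b _
        rw [if_neg]
        rintro rfl
        exact hx b.2
  -- e * single c 1 = e for c ∈ H
  have hstab : ∀ c : H, e * MonoidAlgebra.single (c : G) (1 : F) = e := by
    intro c
    rw [he, smul_mul_assoc, Finset.sum_mul]
    congr 1
    have : ∀ y : H, MonoidAlgebra.single (y : G) (1 : F) *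
        MonoidAlgebra.single (c : G) (1 : F) =
        MonoidAlgebra.single ((y * c : H) : G) (1 : F) := by
      intro y
      rw [MonoidAlgebra.single_mul_single, one_mul]
      rfl
    rw [Finset.sum_congr rfl (fun y _ => this y)]
    exact Fintype.sum_equiv (Equiv.mulRight c) _ _ (fun y => rfl)
  have hee : e * e = e := by
    nth_rewrite 2 [he]
    rw [mul_smul_comm, Finset.mul_sum]
    rw [Finset.sum_congr rfl (fun y _ => hstab y)]
    rw [Finset.sum_const, Finset.card_univ, ← Nat.cast_smul_eq_nsmul F,
      smul_smul, hcard, inv_mul_cancel₀ hinv, one_smul]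
  -- centrality gives conjugation invariance of coefficients
  have key : ∀ h : G, h * g * h⁻¹ ∈ H := by
    intro h
    have hc := hidem e hee (MonoidAlgebra.single h 1)
    -- evaluate both sides at h * g
    have := congrArg (fun f : MonoidAlgebra F G => f.coeff (h * g)) hc
    simp only [MonoidAlgebra.single_mul_apply, MonoidAlgebra.mul_single_apply,
      inv_mul_cancel_left, one_mul, mul_one] at this
    -- this : e g = e (h * g * h⁻¹)
    rw [heval, heval] at this
    by_contra hmem
    rw [if_neg hmem, if_pos (Subgroup.mem_zpowers g)] at this
    exact hinv (inv_eq_zero.mp this)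
  constructor
  intro x hx h
  obtain ⟨k, rfl⟩ := hx
  have : h * g ^ k * h⁻¹ = (h * g * h⁻¹) ^ k := by
    have := (map_zpow (MulAut.conj h) g k).symm
    simpa using this
  rw [this]
  exact Subgroup.zpow_mem H (key h) k
end

section
/- Every nonabelian group in which every subgroup is normal (a Hamiltonian group) contains a subgroup isomorphic to the quaternion group Q₈ of order 8. Consequently, if G is a torsion группа all of whose cyclic subgroups are normal and G contains no copy of Q₈, then G is abelian. -/
lemma embed_q8 {G : Type} [Group G] (X Y : G) (hx : orderOf X = 4)
    (hy2 : Y * Y = X * X) (hconj : Y * X * Y⁻¹ = X⁻¹) :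
    ∃ H : Subgroup G, Nonempty (H ≃* QuaternionGroup 2) := by
  have hx2 : X ^ (2:ℕ) ≠ 1 := by
    intro h
    have := orderOf_dvd_of_pow_eq_one h
    rw [hx] at this
    omega
  set E : ℤ → G := fun k => X ^ k with hE
  have Emod : ∀ j k : ℤ, (j : ZMod 4) = (k : ZMod 4) → E j = E k := by
    intro j k h
    have hjk : j % 4 = k % 4 := by
      rwa [ZMod.intCast_eq_intCast_iff', show ((4:ℕ):ℤ) = 4 by norm_num] at h
    have h1 : E j = X ^ (j % 4) := by
      simp only [hE]
      rw [show (4:ℤ) = ((orderOf X : ℕ) : ℤ) by rw [hx]; norm_num, zpow_mod_orderOf]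
    have h2 : E k = X ^ (k % 4) := by
      simp only [hE]
      rw [show (4:ℤ) = ((orderOf X : ℕ) : ℤ) by rw [hx]; norm_num, zpow_mod_orderOf]
    rw [h1, h2, hjk]
  have hEadd : ∀ j k : ℤ, E (j + k) = E j * E k := fun j k => zpow_add X j k
  have hcomm : ∀ k : ℤ, E k * Y = Y * E (-k) := by
    intro k
    have hconj' : Y⁻¹ * X * Y = X⁻¹ := by
      have h0 : Y⁻¹ * X⁻¹ * Y = X := by rw [← hconj]; group
      calc Y⁻¹ * X * Y = (Y⁻¹ * X⁻¹ * Y)⁻¹ := by group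
        _ = X⁻¹ := by rw [h0]
    have h1 : Y⁻¹ * X ^ k * Y = X ^ (-k) := by
      have := conj_zpow (i := k) (a := Y⁻¹) (b := X)
      rw [inv_inv] at this
      rw [← this, hconj', inv_zpow, ← zpow_neg]
    simp only [hE]
    rw [← h1]
    group
  have hY2 : Y * Y = E 2 := by rw [hy2]; simp [hE]; rw [pow_two]
  -- the homomorphism
  set f : QuaternionGroup 2 → G := fun q =>
    match q with
    | QuaternionGroup.a i => E i.val
    | QuaternionGroup.xa i => Y * E i.val
    with hf
  have hvalcast : ∀ i : ZMod 4, ((i.val : ℤ) : ZMod 4) = i := by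
    intro i
    push_cast
    exact ZMod.natCast_rightInverse i
  have hmul : ∀ q r : QuaternionGroup 2, f (q * r) = f q * f r := by
    rintro (i | i) (j | j)
    · show E (((i+j : ZMod (2*2))).val) = E i.val * E j.val
      rw [← hEadd]
      apply Emod
      push_cast [hvalcast]
      ring
    · show Y * E (((j - i : ZMod (2*2))).val) = E i.val * (Y * E j.val)
      rw [← mul_assoc, hcomm, mul_assoc, ← hEadd]
      congr 1
      apply Emod
      push_cast [hvalcast]
      ring
    · show Y * E (((i+j : ZMod (2*2))).val) = Y * E i.val * E j.val
      rw [mul_assoc, ← hEadd]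
      congr 1
      apply Emod
      push_cast [hvalcast]
      ring
    · show E ((((2:ℕ) + j - i : ZMod (2*2))).val) = (Y * E i.val) * (Y * E j.val)
      have : (Y * E i.val) * (Y * E j.val) = (Y * Y) * (E (-(i.val:ℤ)) * E (j.val:ℤ)) := by
        rw [mul_assoc, ← mul_assoc (E (i.val:ℤ)), hcomm, mul_assoc, ← mul_assoc Y Y]
      rw [this, hY2, ← hEadd, ← hEadd]
      apply Emod
      push_cast [hvalcast]
      ring
  have hfinj : Function.Injective f := by
    have hXpow : ∀ i j : ZMod 4, E i.val = E j.val → i = j := by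
      intro i j h
      have : X ^ (i.val : ℕ) = X ^ (j.val : ℕ) := by
        simpa only [hE, zpow_natCast] using h
      have hv : i.val = j.val := by
        apply pow_injOn_Iio_orderOf (by simp [hx, ZMod.val_lt i]) (by simp [hx, ZMod.val_lt j]) this
      have := congrArg (fun n : ℕ => (n : ZMod 4)) hv
      simpa [ZMod.natCast_rightInverse i, ZMod.natCast_rightInverse j] using this
    have hYnot : ∀ k : ℤ, Y ≠ E k := by
      intro k h
      have hcom : Y * X = X * Y := by
        have : Commute X Y := by rw [h]; exact (Commute.refl X).zpow_right k
        exact this.symm.eq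
      have : X⁻¹ = X := by
        rw [← hconj, hcom, mul_assoc, mul_inv_cancel, mul_one]
      have h2 : X ^ (2:ℕ) = 1 := by
        rw [pow_two]
        nth_rewrite 1 [← this]
        exact inv_mul_cancel X
      exact hx2 h2
    rintro (i | i) (j | j) h
    · rw [hXpow i j h]
    · exfalso
      apply hYnot ((i.val : ℤ) - j.val)
      have h' : E i.val = Y * E j.val := h
      have h2 : Y = E i.val * (E j.val)⁻¹ := by rw [h']; group
      rw [h2]
      simp only [hE]
      exact (zpow_sub X _ _).symm
    · exfalso
      apply hYnot ((j.val : ℤ) - i.val)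
      have h' : Y * E i.val = E j.val := h
      have h2 : Y = E j.val * (E i.val)⁻¹ := by rw [← h']; group
      rw [h2]
      simp only [hE]
      exact (zpow_sub X _ _).symm
    · have : Y * E i.val = Y * E j.val := h
      rw [hXpow i j (mul_left_cancel this)]
  exact ⟨(MonoidHom.mk' f hmul).range, ⟨(MonoidHom.ofInjective (f := MonoidHom.mk' f hmul) hfinj).symm⟩⟩


open Subgroup

section Ded
variable {G : Type} [Group G]

/-- basic commutator data for a noncommuting pair in a group with normal cyclic subgroups -/
lemma basic_data (hz : ∀ g : G, (Subgroup.zpowers g).Normal) (a b : G) (hab : a * b ≠ b * a) :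
    ∃ c : G, b⁻¹ * a * b = a * c ∧ c ≠ 1 ∧ c ∈ zpowers a ∧ c ∈ zpowers b := by
  refine ⟨a⁻¹ * (b⁻¹ * a * b), by group, ?_, ?_, ?_⟩
  · intro h
    apply hab
    have : b⁻¹ * a * b = a := by
      have := congrArg (fun g => a * g) h
      simpa [mul_assoc] using this
    calc a * b = b * (b⁻¹ * a * b) := by group
      _ = b * a := by rw [this]
  · exact mul_mem (inv_mem (mem_zpowers a)) (by simpa using (hz a).conj_mem a (mem_zpowers a) b⁻¹)
  · have h1 : a⁻¹ * b⁻¹ * a ∈ zpowers b := by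
      simpa using (hz b).conj_mem b⁻¹ (inv_mem (mem_zpowers b)) a⁻¹
    have : a⁻¹ * (b⁻¹ * a * b) = (a⁻¹ * b⁻¹ * a) * b := by group
    rw [this]
    exact mul_mem h1 (mem_zpowers b)

/-- conjugation of powers -/
lemma conj_pow_z (a b c : G) (hconj : b⁻¹ * a * b = a * c) (hac : Commute a c) (n : ℤ) :
    b⁻¹ * a ^ n * b = a ^ n * c ^ n := by
  have h1 : b⁻¹ * a ^ n * b = (b⁻¹ * a * b) ^ n := by
    have := conj_zpow (i := n) (a := b⁻¹) (b := a)
    rw [inv_inv] at this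
    rw [← this]
  rw [h1, hconj, hac.mul_zpow]

lemma conj_pow_n (a b c : G) (hconj : b⁻¹ * a * b = a * c) (hac : Commute a c) (n : ℕ) :
    b⁻¹ * a ^ n * b = a ^ n * c ^ n := by
  have := conj_pow_z a b c hconj hac n
  simpa using this

/-- every element of a noncommuting pair has finite order -/
lemma fin_ord (hz : ∀ g : G, (Subgroup.zpowers g).Normal) (a b : G) (hab : a * b ≠ b * a) :
    IsOfFinOrder a := by
  obtain ⟨c, hconj, hc1, ⟨k, hk⟩, hcb⟩ := basic_data hz a b hab
  change a ^ k = c at hk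
  have hac : Commute a c := by rw [← hk]; exact (Commute.refl a).zpow_right k
  have hbc : Commute b c := by
    obtain ⟨l, hl⟩ := hcb
    change b ^ l = c at hl
    rw [← hl]; exact (Commute.refl b).zpow_right l
  have h1 : b⁻¹ * c * b = c := by
    rw [mul_assoc, ← hbc.eq, ← mul_assoc, inv_mul_cancel, one_mul]
  have h2 : b⁻¹ * c * b = c * c ^ k := by
    conv_lhs => rw [← hk]
    rw [conj_pow_z a b c hconj hac k, hk]
  have h3 : c ^ k = 1 := by
    have := h1.symm.trans h2
    exact (left_eq_mul.mp this)
  have hk0 : k ≠ 0 := by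
    intro h
    rw [h] at hk
    exact hc1 (by simpa using hk.symm)
  have h4 : a ^ (k * k) = 1 := by
    rw [zpow_mul, hk, h3]
  rw [isOfFinOrder_iff_pow_eq_one]
  refine ⟨(k * k).natAbs, by positivity, ?_⟩
  have h5 : a ^ (((k * k).natAbs : ℤ)) = 1 := by
    rwa [Int.natAbs_of_nonneg (mul_self_nonneg k)]
  rwa [zpow_natCast] at h5

/-- central "binomial" formula: if `y * x = x * y * d` with `d` central, then
`(x*y)^n = x^n * y^n * d^(n.choose 2)` -/
lemma cen_pow (x y d : G) (hd : y * x = x * y * d) (hdx : Commute d x) (hdy : Commute d y) :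
    ∀ n : ℕ, (x * y) ^ n = x ^ n * y ^ n * d ^ (n.choose 2) := by
  have hyx : ∀ n : ℕ, y ^ n * x = x * y ^ n * d ^ n := by
    intro n
    induction n with
    | zero => simp
    | succ n ih =>
      have h : d ^ n * y = y * d ^ n := (hdy.pow_left n).eq
      calc y ^ (n + 1) * x = y * (y ^ n * x) := by rw [pow_succ]; group
        _ = y * (x * y ^ n * d ^ n) := by rw [ih]
        _ = (y * x) * y ^ n * d ^ n := by group
        _ = x * y * d * y ^ n * d ^ n := by rw [hd]
        _ = x * (y * y ^ n) * (d * d ^ n) := by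
            rw [mul_assoc (x*y) d, (hdy.pow_right n).eq]; group
        _ = x * y ^ (n + 1) * d ^ (n + 1) := by rw [pow_succ' y, pow_succ' d]
  intro n
  induction n with
  | zero => simp
  | succ n ih =>
    have hchoose : (n + 1).choose 2 = n.choose 2 + n := by
      rw [Nat.choose_succ_succ]
      simp [Nat.choose_one_right, Nat.add_comm]
    have h : d ^ n * y = y * d ^ n := (hdy.pow_left n).eq
    have h2 : d ^ n.choose 2 * (x * y) = x * y * d ^ n.choose 2 :=
      ((hdx.pow_left _).mul_right (hdy.pow_left _)).eq
    calc (x * y) ^ (n + 1) = (x * y) ^ n * (x * y) := pow_succ _ _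
      _ = x ^ n * y ^ n * (d ^ n.choose 2 * (x * y)) := by rw [ih]; group
      _ = x ^ n * y ^ n * (x * y * d ^ n.choose 2) := by rw [h2]
      _ = x ^ n * (y ^ n * x) * y * d ^ n.choose 2 := by group
      _ = x ^ n * (x * y ^ n * d ^ n) * y * d ^ n.choose 2 := by rw [hyx n]
      _ = x ^ n * x * y ^ n * (d ^ n * y) * d ^ n.choose 2 := by group
      _ = x ^ n * x * y ^ n * (y * d ^ n) * d ^ n.choose 2 := by rw [h]
      _ = (x ^ n * x) * (y ^ n * y) * (d ^ n * d ^ n.choose 2) := by group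
      _ = x ^ (n + 1) * y ^ (n + 1) * d ^ ((n + 1).choose 2) := by
          rw [← pow_succ x, ← pow_succ y, ← pow_add, hchoose, Nat.add_comm n (n.choose 2)]

/-- in a cyclic p-group ⟨a⟩, an element c of order p has p^(α-1) ∣ exponent, and
a^(p^(α-1)) is a power of c -/
lemma root_extract (a c : G) (p α : ℕ) (hp : p.Prime) (hα : 0 < α)
    (ha : orderOf a = p ^ α) (hc : orderOf c = p) (k : ℤ) (hk : a ^ k = c) :
    ∃ k₀ s : ℤ, k = (p : ℤ) ^ (α - 1) * k₀ ∧ ¬ ((p : ℤ) ∣ k₀) ∧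
      c ^ s = a ^ ((p : ℤ) ^ (α - 1)) ∧ ¬ ((p : ℤ) ∣ s) := by
  have hpα : (p : ℤ) ^ α = (p : ℤ) ^ (α - 1) * p := by
    rw [← pow_succ, Nat.sub_add_cancel hα]
  have haz : a ^ ((p : ℤ) ^ α) = 1 := by
    have h0 := pow_orderOf_eq_one a
    rw [ha] at h0
    rw [show ((p:ℤ)^α) = ((p ^ α : ℕ) : ℤ) by push_cast; ring, zpow_natCast, h0]
  have hcp : c ^ ((p : ℤ)) = 1 := by
    have h0 := pow_orderOf_eq_one c
    rw [hc] at h0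
    rw [show ((p:ℤ)) = ((p : ℕ) : ℤ) by push_cast; ring, zpow_natCast, h0]
  have hc1 : c ≠ 1 := by
    intro h
    rw [h, orderOf_one] at hc
    exact hp.one_lt.ne' hc.symm
  -- p^(α-1) ∣ k
  have hdvd : ((p : ℤ) ^ α) ∣ k * p := by
    rw [show ((p:ℤ)^α) = ((p ^ α : ℕ) : ℤ) by push_cast; ring, ← ha,
      orderOf_dvd_iff_zpow_eq_one]
    rw [zpow_mul, hk, hcp]
  have hdvd2 : ((p : ℤ) ^ (α - 1)) ∣ k := by
    rw [hpα] at hdvd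
    exact (mul_dvd_mul_iff_right (by exact_mod_cast hp.ne_zero : (p:ℤ) ≠ 0)).mp hdvd
  obtain ⟨k₀, hk₀⟩ := hdvd2
  have hpk₀ : ¬ ((p : ℤ) ∣ k₀) := by
    intro ⟨w, hw⟩
    apply hc1
    rw [← hk]
    have : a ^ k = 1 := by
      rw [hk₀, hw, show (p:ℤ)^(α-1) * ((p:ℤ) * w) = (p:ℤ)^α * w by rw [hpα]; ring,
        zpow_mul, haz, one_zpow]
    rw [this]
  -- invert k₀ mod p
  have hg : Int.gcd k₀ (p : ℤ) = 1 := by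
    rcases (Nat.Prime.eq_one_or_self_of_dvd hp (Int.gcd k₀ (p : ℤ))
      (by exact_mod_cast Int.gcd_dvd_right (a := k₀) (b := (p:ℤ)))) with h | h
    · exact h
    · exfalso
      apply hpk₀
      have := Int.gcd_dvd_left (a := k₀) (b := (p:ℤ))
      rwa [h] at this
  obtain ⟨u, v, huv⟩ := Int.isCoprime_iff_gcd_eq_one.mpr hg
  refine ⟨k₀, u, hk₀, hpk₀, ?_, ?_⟩
  · have hexp : k * u = (p : ℤ) ^ (α - 1) + (p : ℤ) ^ α * (-v) := by
      rw [hk₀]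
      linear_combination ((p:ℤ)^(α-1)) * huv + v * hpα
    rw [← hk, ← zpow_mul, hexp, zpow_add, zpow_mul, haz, one_zpow, mul_one]
  · intro hdu
    have h1 : (p : ℤ) ∣ 1 := by
      rw [← huv]
      exact dvd_add (hdu.mul_right k₀) ⟨v, mul_comm v _⟩
    have := Int.le_of_dvd one_pos h1
    have := hp.one_lt
    omega

/-- for a minimal noncommuting pair, orders are prime powers -/
lemma prime_pow_order (hz : ∀ g : G, (Subgroup.zpowers g).Normal) (a b : G)
    (hab : a * b ≠ b * a)
    (hmin : ∀ x y : G, x * y ≠ y * x → orderOf a + orderOf b ≤ orderOf x + orderOf y) :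
    ∃ p α, p.Prime ∧ 0 < α ∧ orderOf a = p ^ α := by
  have hfa : IsOfFinOrder a := fin_ord hz a b hab
  set m := orderOf a with hm
  have hm0 : 0 < m := hfa.orderOf_pos
  have hm1 : m ≠ 1 := by
    intro h
    apply hab
    have : a = 1 := orderOf_eq_one_iff.mp h
    rw [this, one_mul, mul_one]
  by_cases hpp : IsPrimePow m
  · obtain ⟨p, k, hp, hk, hpk⟩ := hpp
    exact ⟨p, k, Nat.prime_iff.mpr hp, hk, hpk.symm⟩
  exfalso
  -- reduction step
  have hred : ∀ d e : ℕ, d * e = m → 1 < d → 0 < e → ¬ Commute (a ^ d) b → False := by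
    intro d e hde hd he hcomm
    have hne : (a ^ d) * b ≠ b * (a ^ d) := hcomm
    have h1 := hmin (a ^ d) b hne
    have hord : orderOf (a ^ d) = e := by
      rw [orderOf_pow' a (by omega : d ≠ 0), ← hm]
      have hdm : d ∣ m := Dvd.intro e hde
      rw [Nat.gcd_eq_right hdm, ← hde, Nat.mul_div_cancel_left e (by omega : 0 < d)]
    rw [hord] at h1
    have : m ≤ e := by omega
    have : e < m := by
      rw [← hde]
      exact Nat.lt_mul_iff_one_lt_left he |>.mpr hd
    omega
  -- coprime splitting
  set p := m.minFac with hpdef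
  have hp : p.Prime := Nat.minFac_prime hm1
  set m₁ := p ^ m.factorization p with hm₁def
  set m₂ := m / m₁ with hm₂def
  have hsplit : m₁ * m₂ = m := Nat.ordProj_mul_ordCompl_eq_self m p
  have hfpos : 0 < m.factorization p := by
    apply Nat.Prime.factorization_pos_of_dvd hp (by omega)
    exact Nat.minFac_dvd m
  have hm₁ : 1 < m₁ := by
    calc 1 < p := hp.one_lt
      _ ≤ m₁ := Nat.le_self_pow (by omega) p
  have hm₂pos : 0 < m₂ := Nat.ordCompl_pos p (by omega)
  have hm₂ : 1 < m₂ := by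
    rcases Nat.lt_or_ge m₂ 2 with h | h
    · exfalso
      apply hpp
      have : m₂ = 1 := by omega
      rw [this, mul_one] at hsplit
      exact ⟨p, m.factorization p, Nat.prime_iff.mp hp, hfpos, hsplit⟩
    · omega
  have hcop : Nat.Coprime m₁ m₂ := Nat.Coprime.pow_left _ (Nat.coprime_ordCompl hp (by omega))
  -- b cannot commute with both
  have hboth : ¬ (Commute (a ^ m₁) b ∧ Commute (a ^ m₂) b) := by
    rintro ⟨h1, h2⟩
    apply hab
    have hg : Int.gcd (m₁ : ℤ) (m₂ : ℤ) = 1 := by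
      rw [Int.gcd_natCast_natCast]
      exact hcop
    obtain ⟨u, v, huv⟩ := Int.isCoprime_iff_gcd_eq_one.mpr hg
    have ha' : a = (a ^ m₁) ^ u * (a ^ m₂) ^ v := by
      have : ((a ^ m₁ : G)) ^ u * (a ^ m₂) ^ v = a ^ (u * (m₁ : ℤ) + v * (m₂ : ℤ)) := by
        rw [zpow_add, ← zpow_natCast a m₁, ← zpow_natCast a m₂, ← zpow_mul, ← zpow_mul]
        ring_nf
      rw [this, huv, zpow_one]
    have hcom : Commute a b := by
      rw [ha']
      exact ((h1.zpow_left u).mul_left (h2.zpow_left v)).symm.symm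
    exact hcom
  rcases not_and_or.mp hboth with h | h
  · exact hred m₁ m₂ hsplit hm₁ hm₂pos h
  · exact hred m₂ m₁ (by rw [mul_comm]; exact hsplit) hm₂ (by omega) h

/-- with minimality: the commutator has order exactly p -/
lemma comm_struct (hz : ∀ g : G, (Subgroup.zpowers g).Normal) (a b : G)
    (hab : a * b ≠ b * a)
    (hmin : ∀ x y : G, x * y ≠ y * x → orderOf a + orderOf b ≤ orderOf x + orderOf y)
    (p α β : ℕ) (hp : p.Prime) (hα : 0 < α) (hβ : 0 < β)
    (ha : orderOf a = p ^ α) (hb : orderOf b = p ^ β) :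
    ∃ c : G, b⁻¹ * a * b = a * c ∧ c ≠ 1 ∧ orderOf c = p ∧
      (∃ k : ℤ, a ^ k = c) ∧ (∃ l : ℤ, b ^ l = c) := by
  obtain ⟨c, hconj, hc1, hca, hcb⟩ := basic_data hz a b hab
  obtain ⟨k, hk⟩ := hca
  change a ^ k = c at hk
  obtain ⟨l, hl⟩ := hcb
  change b ^ l = c at hl
  have hac : Commute a c := by rw [← hk]; exact (Commute.refl a).zpow_right k
  have hordap : orderOf (a ^ p) = p ^ (α - 1) := by
    rw [orderOf_pow' a hp.ne_zero, ha, Nat.gcd_eq_right (dvd_pow_self p (by omega)),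
      show p ^ α = p ^ (α - 1) * p from by rw [← pow_succ, Nat.sub_add_cancel hα],
      Nat.mul_div_cancel _ hp.pos]
  have hcomm : Commute (a ^ p) b := by
    by_contra h
    have h1 := hmin (a ^ p) b h
    rw [ha, hb, hordap] at h1
    have : p ^ (α - 1) < p ^ α := Nat.pow_lt_pow_right hp.one_lt (by omega)
    omega
  have hcp : c ^ p = 1 := by
    have h2 : b⁻¹ * a ^ p * b = a ^ p * c ^ p := conj_pow_n a b c hconj hac p
    have h3 : b⁻¹ * a ^ p * b = a ^ p := by
      rw [mul_assoc, hcomm.eq, ← mul_assoc, inv_mul_cancel, one_mul]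
    rw [h3] at h2
    exact left_eq_mul.mp h2
  have hordc : orderOf c = p := by
    rcases (Nat.Prime.eq_one_or_self_of_dvd hp (orderOf c) (orderOf_dvd_of_pow_eq_one hcp))
      with h | h
    · exact absurd (orderOf_eq_one_iff.mp h) hc1
    · exact h
  exact ⟨c, hconj, hc1, hordc, ⟨k, hk⟩, ⟨l, hl⟩⟩

lemma noncomm_of_conj (x b c : G) (h : b⁻¹ * x * b = x * c) (hc : c ≠ 1) :
    x * b ≠ b * x := by
  intro hxb
  apply hc
  have h2 : b⁻¹ * x * b = x := by
    rw [mul_assoc, hxb, ← mul_assoc, inv_mul_cancel, one_mul]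
  rw [h2] at h
  exact left_eq_mul.mp h

lemma aux_main (hz : ∀ g : G, (Subgroup.zpowers g).Normal) (a b : G)
    (hab : a * b ≠ b * a)
    (hmin : ∀ x y : G, x * y ≠ y * x → orderOf a + orderOf b ≤ orderOf x + orderOf y)
    (p α β : ℕ) (hp : p.Prime) (hα : 0 < α) (hβ : 0 < β)
    (ha : orderOf a = p ^ α) (hb : orderOf b = p ^ β) : 2 ≤ α ∧ β ≤ α := by
  obtain ⟨c, hconj, hc1, hordc, ⟨k, hk⟩, ⟨l, hl⟩⟩ :=
    comm_struct hz a b hab hmin p α β hp hα hβ ha hb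
  have hac : Commute a c := by rw [← hk]; exact (Commute.refl a).zpow_right k
  have hbc : Commute b c := by rw [← hl]; exact (Commute.refl b).zpow_right l
  obtain ⟨k₀, s, hk₀, hpk₀, hs, hps⟩ := root_extract a c p α hp hα ha hordc k hk
  obtain ⟨l₀, t, hl₀, hpl₀, ht, hpt⟩ := root_extract b c p β hp hβ hb hordc l hl
  have hα2 : 2 ≤ α := by
    by_contra h
    have hα1 : α = 1 := by omega
    have hsa : c ^ s = a := by
      rw [hs, hα1]
      norm_num
    apply hab
    have hcomm : Commute b a := by
      rw [← hsa, ← hl, ← zpow_mul]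
      exact (Commute.refl b).zpow_right _
    exact hcomm.symm.eq
  refine ⟨hα2, ?_⟩
  by_contra hcon
  have hlt : α < β := by omega
  set u : ℤ := -s * l₀ * (p : ℤ) ^ (β - 1 - α) with hu
  set z : G := b ^ ((p : ℤ) * u) with hzdef
  have hcp : c ^ ((p : ℤ)) = 1 := by
    have h0 := pow_orderOf_eq_one c
    rw [hordc] at h0
    rw [show ((p:ℤ)) = ((p:ℕ):ℤ) from rfl, zpow_natCast, h0]
  have hconj2 : a⁻¹ * b * a = b * c⁻¹ := by
    have h1 : a * b = b * a * c := by
      calc a * b = b * (b⁻¹ * a * b) := by group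
        _ = b * (a * c) := by rw [hconj]
        _ = b * a * c := by group
    calc a⁻¹ * b * a = a⁻¹ * (b * a * c) * c⁻¹ := by group
      _ = a⁻¹ * (a * b) * c⁻¹ := by rw [← h1]
      _ = b * c⁻¹ := by group
  have hzconj : a⁻¹ * z * a = z * (c⁻¹) ^ ((p:ℤ) * u) :=
    conj_pow_z b a c⁻¹ hconj2 hbc.inv_right ((p:ℤ) * u)
  have hcpu : (c⁻¹ : G) ^ ((p:ℤ) * u) = 1 := by
    rw [inv_zpow, zpow_mul, hcp, one_zpow, inv_one]
  have hza : Commute a z := by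
    have h2 : a⁻¹ * z * a = z := by rw [hzconj, hcpu, mul_one]
    have h3 : z * a = a * z := by
      calc z * a = a * (a⁻¹ * z * a) := by group
        _ = a * z := by rw [h2]
    exact h3.symm
  have hzb : Commute b z := (Commute.refl b).zpow_right _
  have hzc : Commute z c := by rw [← hl]; exact ((Commute.refl b).zpow_right l).zpow_left _
  set x : G := a * z with hxdef
  have hxconj : b⁻¹ * x * b = x * c := by
    calc b⁻¹ * (a * z) * b = (b⁻¹ * a * b) * (b⁻¹ * z * b) := by group
      _ = (a * c) * z := by
          rw [hconj]
          congr 1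
          rw [mul_assoc, ← hzb.eq, ← mul_assoc, inv_mul_cancel, one_mul]
      _ = (a * z) * c := by rw [mul_assoc, hzc.symm.eq, ← mul_assoc]
  have hxb : x * b ≠ b * x := noncomm_of_conj x b c hxconj hc1
  -- order of x divides p^(α-1)
  have hpow : (p:ℤ) * (p:ℤ) ^ (β - 1 - α) * (p:ℤ) ^ (α - 1) = (p:ℤ) ^ (β - 1) := by
    rw [← pow_succ', ← pow_add]
    congr 1
    omega
  have hexp : (p:ℤ) * u * (p:ℤ) ^ (α - 1) = l * (-s) := by
    rw [hu, hl₀]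
    linear_combination (-(s * l₀)) * hpow
  have hxord : x ^ ((p:ℤ) ^ (α - 1)) = 1 := by
    rw [hxdef, hza.mul_zpow, ← hs]
    have hzN : z ^ ((p:ℤ) ^ (α - 1)) = c ^ (-s) := by
      rw [hzdef, ← zpow_mul, hexp, zpow_mul, hl]
    rw [hzN, ← zpow_add]
    simp
  have hxordn : x ^ ((p ^ (α - 1) : ℕ)) = 1 := by
    have : x ^ (((p ^ (α-1) : ℕ) : ℤ)) = 1 := by
      rw [show (((p ^ (α-1) : ℕ) : ℤ)) = (p:ℤ) ^ (α-1) from by push_cast; ring]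
      exact hxord
    rwa [zpow_natCast] at this
  have hxle : orderOf x ≤ p ^ (α - 1) :=
    Nat.le_of_dvd (Nat.pow_pos hp.pos) (orderOf_dvd_of_pow_eq_one hxordn)
  have h1 := hmin x b hxb
  rw [ha, hb] at h1
  have : p ^ (α - 1) < p ^ α := Nat.pow_lt_pow_right hp.one_lt (by omega)
  omega

lemma zinv_mod (p : ℕ) (hp : p.Prime) (s : ℤ) (hps : ¬ ((p : ℤ) ∣ s)) :
    ∃ u v : ℤ, u * s + v * p = 1 := by
  have hg : Int.gcd s (p : ℤ) = 1 := by
    rcases hp.eq_one_or_self_of_dvd (Int.gcd s (p : ℤ))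
      (by exact_mod_cast Int.gcd_dvd_right (a := s) (b := (p : ℤ))) with h | h
    · exact h
    · exfalso
      apply hps
      have := Int.gcd_dvd_left (a := s) (b := (p : ℤ))
      rwa [h] at this
  exact Int.isCoprime_iff_gcd_eq_one.mpr hg

lemma nt_final (p α : ℕ) (hp : p.Prime) (hα : 2 ≤ α)
    (h : ¬ (p ∣ (p ^ (α - 1)).choose 2)) : p = 2 ∧ α = 2 := by
  have hchoose : (p ^ (α - 1)).choose 2 = p ^ (α - 1) * (p ^ (α - 1) - 1) / 2 :=
    Nat.choose_two_right _
  by_cases hp2 : p = 2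
  · subst hp2
    refine ⟨rfl, ?_⟩
    by_contra hα3
    have h3 : 3 ≤ α := by omega
    apply h
    have hN : 2 ^ (α - 1) = 2 * 2 ^ (α - 2) := by
      rw [← pow_succ']
      congr 1
      omega
    rw [hchoose, hN, mul_assoc, Nat.mul_div_cancel_left _ (by norm_num : 0 < 2)]
    exact Dvd.dvd.mul_right (dvd_pow_self 2 (by omega : α - 2 ≠ 0)) _
  · exfalso
    apply h
    have hodd : Odd (p ^ (α - 1)) := (hp.odd_of_ne_two hp2).pow
    have h2 : 2 ∣ p ^ (α - 1) - 1 := by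
      obtain ⟨w, hw⟩ := hodd
      omega
    rw [hchoose, Nat.mul_div_assoc _ h2]
    exact Dvd.dvd.mul_right (dvd_pow_self p (by omega : α - 1 ≠ 0)) _

lemma find_q8 (hz : ∀ g : G, (Subgroup.zpowers g).Normal)
    (hnab : ¬ ∀ x y : G, x * y = y * x) :
    ∃ X Y : G, orderOf X = 4 ∧ Y * Y = X * X ∧ Y * X * Y⁻¹ = X⁻¹ := by
  push_neg at hnab
  obtain ⟨a₀, b₀, hab₀⟩ := hnab
  set S : Set ℕ := {n | ∃ x y : G, x * y ≠ y * x ∧ orderOf x + orderOf y = n} with hSdef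
  have hSne : S.Nonempty := ⟨orderOf a₀ + orderOf b₀, a₀, b₀, hab₀, rfl⟩
  obtain ⟨a, b, hab, hsum⟩ := Nat.sInf_mem hSne
  have hmin : ∀ x y : G, x * y ≠ y * x → orderOf a + orderOf b ≤ orderOf x + orderOf y := by
    intro x y h
    rw [hsum]
    exact Nat.sInf_le ⟨x, y, h, rfl⟩
  have hab' : b * a ≠ a * b := fun h => hab h.symm
  have hmin' : ∀ x y : G, x * y ≠ y * x → orderOf b + orderOf a ≤ orderOf x + orderOf y := by
    intro x y h
    have := hmin x y h
    omega
  obtain ⟨p, α, hp, hα, ha⟩ := prime_pow_order hz a b hab hmin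
  obtain ⟨q, β, hq, hβ, hb⟩ := prime_pow_order hz b a hab' hmin'
  -- p = q
  have hpq : p = q := by
    obtain ⟨c, _, hc1, hca, hcb⟩ := basic_data hz a b hab
    have hd1 : orderOf c ∣ p ^ α := ha ▸ orderOf_dvd_of_mem_zpowers hca
    have hd2 : orderOf c ∣ q ^ β := hb ▸ orderOf_dvd_of_mem_zpowers hcb
    have hdne : orderOf c ≠ 1 := fun h => hc1 (orderOf_eq_one_iff.mp h)
    have hdne0 : orderOf c ≠ 0 := by
      intro h
      rw [h] at hd1
      exact (pow_ne_zero α hp.ne_zero) (Nat.eq_zero_of_zero_dvd hd1)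
    have hr : (orderOf c).minFac.Prime := Nat.minFac_prime hdne
    have hr1 : (orderOf c).minFac ∣ p ^ α := dvd_trans (Nat.minFac_dvd _) hd1
    have hr2 : (orderOf c).minFac ∣ q ^ β := dvd_trans (Nat.minFac_dvd _) hd2
    have hrp : (orderOf c).minFac = p :=
      (Nat.prime_dvd_prime_iff_eq hr hp).mp (hr.dvd_of_dvd_pow hr1)
    have hrq : (orderOf c).minFac = q :=
      (Nat.prime_dvd_prime_iff_eq hr hq).mp (hr.dvd_of_dvd_pow hr2)
    rw [← hrp, hrq]
  subst hpq
  obtain ⟨hα2, hβα⟩ := aux_main hz a b hab hmin p α β hp hα hβ ha hb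
  obtain ⟨hβ2, hαβ⟩ := aux_main hz b a hab' hmin' p β α hp hβ hα hb ha
  have hαβeq : β = α := le_antisymm hβα hαβ
  subst hαβeq
  -- commutator data
  obtain ⟨c, hconj, hc1, hordc, ⟨k, hk⟩, ⟨l, hl⟩⟩ :=
    comm_struct hz a b hab hmin p β β hp hβ hβ ha hb
  have hac : Commute a c := by rw [← hk]; exact (Commute.refl a).zpow_right k
  have hbc : Commute b c := by rw [← hl]; exact (Commute.refl b).zpow_right l
  obtain ⟨k₀, s, hk₀, hpk₀, hs, hps⟩ := root_extract a c p β hp hβ ha hordc k hk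
  obtain ⟨l₀, t, hl₀, hpl₀, ht, hpt⟩ := root_extract b c p β hp hβ hb hordc l hl
  have hcp : c ^ ((p : ℤ)) = 1 := by
    have h0 := pow_orderOf_eq_one c
    rw [hordc] at h0
    rw [show ((p:ℤ)) = ((p:ℕ):ℤ) from rfl, zpow_natCast, h0]
  -- the binomial trick rules out p odd and p = 2, α ≥ 3
  have hkey : ¬ ((p : ℕ) ∣ (p ^ (β - 1)).choose 2) := by
    intro hdvd
    obtain ⟨u, v, huv⟩ := zinv_mod p hp s hps
    set kk : ℤ := -t * u with hkk
    set w : G := a ^ kk * b with hw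
    -- y * x = x * y * d with d = c^(-kk)
    have hyx : b * a ^ kk = a ^ kk * b * c ^ (-kk) := by
      have h2 : b⁻¹ * a ^ kk * b = a ^ kk * c ^ kk := conj_pow_z a b c hconj hac kk
      have hcancel : c ^ kk * c ^ (-kk) = 1 := by rw [← zpow_add]; simp
      calc b * a ^ kk = b * (a ^ kk * (c ^ kk * c ^ (-kk))) := by rw [hcancel, mul_one]
        _ = b * (b⁻¹ * a ^ kk * b) * c ^ (-kk) := by rw [h2]; group
        _ = a ^ kk * b * c ^ (-kk) := by group
    have hd1 : Commute (c ^ (-kk)) (a ^ kk) := (hac.symm.zpow_left (-kk)).zpow_right kk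
    have hd2 : Commute (c ^ (-kk)) b := hbc.symm.zpow_left (-kk)
    have big := cen_pow (a ^ kk) b (c ^ (-kk)) hyx hd1 hd2 (p ^ (β - 1))
    -- compute the three factors
    have hA : (a ^ kk) ^ (p ^ (β - 1)) = c ^ (s * kk) := by
      rw [← zpow_natCast (a ^ kk), ← zpow_mul]
      rw [show kk * ((p ^ (β - 1) : ℕ) : ℤ) = ((p : ℤ) ^ (β - 1)) * kk from by push_cast; ring]
      rw [zpow_mul, ← hs, ← zpow_mul]
    have hB : b ^ (p ^ (β - 1)) = c ^ t := by
      rw [← zpow_natCast b, show (((p ^ (β - 1) : ℕ)) : ℤ) = (p : ℤ) ^ (β - 1) from by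
        push_cast; ring, ← ht]
    have hC : (c ^ (-kk)) ^ ((p ^ (β - 1)).choose 2) = 1 := by
      obtain ⟨m, hm⟩ := hdvd
      rw [← zpow_natCast (c ^ (-kk)), ← zpow_mul, hm]
      rw [show -kk * ((((p : ℕ) * m : ℕ)) : ℤ) = (p : ℤ) * (-kk * m) from by push_cast; ring]
      rw [zpow_mul, hcp, one_zpow]
    have hwN : w ^ (p ^ (β - 1)) = 1 := by
      rw [hw, big, hA, hB, hC, mul_one, ← zpow_add]
      have : s * kk + t = (p : ℤ) * (t * v) := by
        rw [hkk]
        linear_combination (-t) * huv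
      rw [this, zpow_mul, hcp, one_zpow]
    -- w does not commute with a
    have hwa : a * w ≠ w * a := by
      apply noncomm_of_conj a w c _ hc1
      have : w⁻¹ * a * w = b⁻¹ * a * b := by
        rw [hw]
        group
      rw [this, hconj]
    have h1 := hmin a w hwa
    have hwle : orderOf w ≤ p ^ (β - 1) :=
      Nat.le_of_dvd (Nat.pow_pos hp.pos) (orderOf_dvd_of_pow_eq_one hwN)
    rw [ha, hb] at h1
    have : p ^ (β - 1) < p ^ β := Nat.pow_lt_pow_right hp.one_lt (by omega)
    omega
  obtain ⟨hp2, hβ2'⟩ := nt_final p β hp hβ2 hkey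
  subst hp2
  subst hβ2'
  -- now orderOf a = orderOf b = 4, orderOf c = 2
  have hcc : c ^ (2 : ℤ) = 1 := hcp
  have hsodd : ∃ m : ℤ, s = 2 * m + 1 := by
    rcases Int.even_or_odd s with h | h
    · exact absurd (by obtain ⟨m, hm⟩ := h; exact ⟨m, by omega⟩ : (2:ℤ) ∣ s) hps
    · obtain ⟨m, hm⟩ := h
      exact ⟨m, hm⟩
  have htodd : ∃ m : ℤ, t = 2 * m + 1 := by
    rcases Int.even_or_odd t with h | h
    · exact absurd (by obtain ⟨m, hm⟩ := h; exact ⟨m, by omega⟩ : (2:ℤ) ∣ t) hpt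
    · obtain ⟨m, hm⟩ := h
      exact ⟨m, hm⟩
  have hs' : c ^ s = a ^ (2 : ℤ) := by
    have := hs
    norm_num at this
    simpa using this
  have ht' : c ^ t = b ^ (2 : ℤ) := by
    have := ht
    norm_num at this
    simpa using this
  have hca2 : c = a ^ (2 : ℤ) := by
    obtain ⟨m, hm⟩ := hsodd
    have h5 : c ^ s = c := by
      rw [hm, zpow_add, zpow_mul, hcc, one_zpow, one_mul, zpow_one]
    calc c = c ^ s := h5.symm
      _ = a ^ (2 : ℤ) := hs'
  have hcb2 : c = b ^ (2 : ℤ) := by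
    obtain ⟨m, hm⟩ := htodd
    have h5 : c ^ t = c := by
      rw [hm, zpow_add, zpow_mul, hcc, one_zpow, one_mul, zpow_one]
    calc c = c ^ t := h5.symm
      _ = b ^ (2 : ℤ) := ht'
  have ha4 : a ^ (4 : ℤ) = 1 := by
    have h0 := pow_orderOf_eq_one a
    rw [ha] at h0
    rw [show (4:ℤ) = ((2 ^ 2 : ℕ) : ℤ) from by norm_num, zpow_natCast, h0]
  refine ⟨a, b⁻¹, by rw [ha]; norm_num, ?_, ?_⟩
  · -- b⁻¹ * b⁻¹ = a * a
    have h1 : b⁻¹ * b⁻¹ = (b ^ (2:ℤ))⁻¹ := by group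
    have h2 : (c : G)⁻¹ = c := by
      rw [← mul_one c⁻¹, ← hcc]
      group
    rw [h1, ← hcb2, h2, hca2]
    rw [show (2:ℤ) = 1 + 1 from rfl, zpow_add, zpow_one]
  · -- b⁻¹ * a * b⁻¹⁻¹ = a⁻¹
    rw [inv_inv, hconj, hca2]
    have : a * a ^ (2:ℤ) = a ^ (3:ℤ) := by group
    rw [this]
    have h3 : a ^ (3:ℤ) * a = 1 := by
      rw [show a ^ (3:ℤ) * a = a ^ (4:ℤ) from by group]
      exact ha4
    exact eq_inv_of_mul_eq_one_left h3

end Ded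


/-- Every Hamiltonian group (nonabelian with all subgroups normal) contains a copy of the
quaternion group `Q₈`; consequently a torsion group whose cyclic subgroups are all normal
and which contains no copy of `Q₈` is abelian. -/
theorem hamiltonian_contains_quaternion_and_torsion_abelian :
    (∀ (G : Type) [Group G], (∀ H : Subgroup G, H.Normal) → (¬ ∀ a b : G, a * b = b * a) →
      ∃ H : Subgroup G, Nonempty (H ≃* QuaternionGroup 2)) ∧
    (∀ (G : Type) [Group G], (∀ g : G, IsOfFinOrder g) →
      (∀ g : G, (Subgroup.zpowers g).Normal) →
      (∀ H : Subgroup G, ¬ Nonempty (H ≃* QuaternionGroup 2)) →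
      ∀ a b : G, a * b = b * a) := by
  constructor
  · intro G _ hN hnab
    obtain ⟨X, Y, hx, hy2, hconj⟩ := find_q8 (fun g => hN _) hnab
    exact embed_q8 X Y hx hy2 hconj
  · intro G _ _ hz hnoQ8 a b
    by_contra hab
    have hnab : ¬ ∀ x y : G, x * y = y * x := fun h => hab (h a b)
    obtain ⟨X, Y, hx, hy2, hconj⟩ := find_q8 hz hnab
    obtain ⟨H, hH⟩ := embed_q8 X Y hx hy2 hconj
    exact hnoQ8 H hH
end
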